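/- arXiv:1703.04781 — 3 statements merged into one kernel-verified Lean document; each statement's English description precedes it below -/
import Mathlib

section
/- Fix α ∈ (0,1), η ≥ 0, a tempering function q, and z ≥ 0. Then lim_{a↓0} a^{-α} η ∫_{(0,∞)}(1 - e^{-(1-e^{-za})x}) q(ax) x^{-1-α} dx = η ∫_{(0,∞)}(1 - e^{-zx}) q(x) x^{-1-α} dx. -/
/-! After the substitution `y = a x` the prefactor `a ^ (-α)` cancels exactly, and the claim becomes
`ψ((1 - e^{-za})/a) → ψ(z)` for `ψ(u) = ∫ (1 - e^{-uy}) q(y) y^{-1-α} dy`. Since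
`(1 - e^{-za})/a → z`, it suffices that `ψ` is continuous on `[0, ∞)`, which is dominated
convergence with the bound `1 - e^{-uy} ≤ max 1 u * min 1 y` and the integrability of
`min 1 y * y^{-1-α}` for `0 < α < 1`. -/

open MeasureTheory Real Set Filter Topology

/-- The Laplace exponent of the tempered stable law with Lévy density `q(y) y^{-1-α}`. -/
noncomputable def temperedStableExponent (α : ℝ) (q : ℝ → ℝ) (u : ℝ) : ℝ :=
  ∫ y in Ioi 0, (1 - exp (-(u * y))) * q y * y ^ (-1 - α)

lemma integrableOn_min_one_mul_rpow_Ioi {α : ℝ} (hα : α ∈ Ioo (0 : ℝ) 1) :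
    IntegrableOn (fun y : ℝ => min 1 y * y ^ (-1 - α)) (Ioi 0) := by
  have h_Ioc : IntegrableOn (fun y : ℝ => min 1 y * y ^ (-1 - α)) (Ioc 0 1) := by
    have h := intervalIntegral.intervalIntegrable_rpow' (a := 0) (b := 1) (r := -α)
      (by linarith [hα.2])
    rw [intervalIntegrable_iff_integrableOn_Ioc_of_le zero_le_one] at h
    refine h.congr_fun (fun y ⟨hy0, hy1⟩ => ?_) measurableSet_Ioc
    rw [min_eq_right hy1, ← rpow_one_add' hy0.le (by linarith [hα.1])]
    ring_nf
  have h_Ioi : IntegrableOn (fun y : ℝ => min 1 y * y ^ (-1 - α)) (Ioi 1) :=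
    (integrableOn_Ioi_rpow_of_lt (a := -1 - α) (by linarith [hα.1]) one_pos).congr_fun
      (fun y hy => by rw [min_eq_left (le_of_lt hy), one_mul]) measurableSet_Ioi
  rw [← Ioc_union_Ioi_eq_Ioi zero_le_one]
  exact h_Ioc.union h_Ioi

lemma one_sub_exp_neg_le_min (t : ℝ) : 1 - exp (-t) ≤ min 1 t :=
  le_min (by linarith [exp_pos (-t)]) (by linarith [add_one_le_exp (-t)])

lemma min_one_mul_le_max_one_mul_min_one (u : ℝ) {y : ℝ} (hy : 0 ≤ y) :
    min 1 (u * y) ≤ max 1 u * min 1 y := by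
  rcases le_total 1 y with h | h
  · rw [min_eq_left h, mul_one]
    exact (min_le_left _ _).trans (le_max_left _ _)
  · rw [min_eq_right h]
    exact (min_le_right _ _).trans (mul_le_mul_of_nonneg_right (le_max_right _ _) hy)

lemma continuousOn_temperedStableExponent {α C : ℝ} (hα : α ∈ Ioo (0 : ℝ) 1) {q : ℝ → ℝ}
    (hq : Measurable q) (hqC : ∀ y, |q y| ≤ C) :
    ContinuousOn (temperedStableExponent α q) (Ici 0) := by
  intro z _
  have h_near : Icc 0 (z + 1) ∈ 𝓝[Ici 0] z :=
    mem_of_superset (inter_mem_nhdsWithin _ (Iio_mem_nhds (lt_add_one z)))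
      fun u ⟨hu0, hu1⟩ => ⟨hu0, hu1.le⟩
  refine tendsto_integral_filter_of_dominated_convergence
    (fun y => C * max 1 (z + 1) * (min 1 y * y ^ (-1 - α))) ?_ ?_
    ((integrableOn_min_one_mul_rpow_Ioi hα).const_mul _) ?_
  · exact .of_forall fun u => by fun_prop
  · filter_upwards [h_near] with u ⟨hu0, hu1⟩
    filter_upwards [ae_restrict_mem measurableSet_Ioi] with y (hy : 0 < y)
    have h_exp : |1 - exp (-(u * y))| ≤ max 1 (z + 1) * min 1 y := by
      rw [abs_of_nonneg (sub_nonneg.mpr (exp_le_one_iff.mpr (neg_nonpos.mpr (by positivity))))]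
      calc 1 - exp (-(u * y)) ≤ min 1 (u * y) := one_sub_exp_neg_le_min _
        _ ≤ max 1 u * min 1 y := min_one_mul_le_max_one_mul_min_one u hy.le
        _ ≤ max 1 (z + 1) * min 1 y := by gcongr
    rw [norm_eq_abs, abs_mul, abs_mul, abs_of_nonneg (rpow_nonneg hy.le _)]
    calc |1 - exp (-(u * y))| * |q y| * y ^ (-1 - α)
        ≤ max 1 (z + 1) * min 1 y * C * y ^ (-1 - α) := by
          gcongr
          exact hqC y
      _ = C * max 1 (z + 1) * (min 1 y * y ^ (-1 - α)) := by ring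
  · exact .of_forall fun y => ((by fun_prop : Continuous fun u =>
      (1 - exp (-(u * y))) * q y * y ^ (-1 - α)).tendsto z).mono_left nhdsWithin_le_nhds

lemma integral_comp_mul_left_mul_rpow_Ioi (f : ℝ → ℝ) {a : ℝ} (ha : 0 < a) (s : ℝ) :
    ∫ x in Ioi 0, f (a * x) * x ^ s = a ^ (-s - 1) * ∫ y in Ioi 0, f y * y ^ s := by
  have h_scale : ∀ x ∈ Ioi (0 : ℝ), f (a * x) * x ^ s = a ^ (-s) * (f (a * x) * (a * x) ^ s) :=
    fun x hx => by
      rw [mul_rpow ha.le (le_of_lt hx), rpow_neg ha.le]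
      field_simp
  rw [setIntegral_congr_fun measurableSet_Ioi h_scale, integral_const_mul,
    integral_comp_mul_left_Ioi (fun y => f y * y ^ s) 0 ha, mul_zero, smul_eq_mul, ← mul_assoc,
    ← rpow_neg_one, ← rpow_add ha, sub_eq_add_neg]

lemma setIntegral_one_sub_exp_neg_mul_comp_mul_eq (α : ℝ) (q : ℝ → ℝ) {a : ℝ} (ha : 0 < a)
    (b : ℝ) :
    ∫ x in Ioi 0, (1 - exp (-(b * x))) * q (a * x) * x ^ (-1 - α) =
      a ^ α * temperedStableExponent α q (b / a) := by
  have h := integral_comp_mul_left_mul_rpow_Ioi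
    (fun y => (1 - exp (-(b / a * y))) * q y) ha (-1 - α)
  rw [show -(-1 - α) - 1 = α by ring] at h
  rw [temperedStableExponent, ← h]
  refine setIntegral_congr_fun measurableSet_Ioi fun x _ => ?_
  rw [← mul_assoc, div_mul_cancel₀ b ha.ne']

lemma tendsto_one_sub_exp_neg_mul_div (z : ℝ) :
    Tendsto (fun a => (1 - exp (-(z * a))) / a) (𝓝[>] 0) (𝓝 z) := by
  have h_deriv : HasDerivAt (fun a => 1 - exp (-(z * a))) z 0 := by
    simpa using (((hasDerivAt_id (0 : ℝ)).const_mul z).neg.exp).const_sub 1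
  refine h_deriv.tendsto_slope_zero_right.congr fun a => ?_
  simp [div_eq_inv_mul]

theorem stmt5_general (α η z : ℝ) (hα : α ∈ Set.Ioo (0:ℝ) 1) (hz : 0 ≤ z)
    (q : ℝ → ℝ) (hqmeas : Measurable q) (hqnonneg : ∀ x, 0 ≤ q x)
    (C : ℝ) (hqbdd : ∀ x, q x ≤ C) :
    Filter.Tendsto
      (fun a : ℝ => a ^ (-α : ℝ) * η * ∫ x in Set.Ioi (0:ℝ),
        (1 - Real.exp (-((1 - Real.exp (-(z * a))) * x))) * q (a * x) * x ^ (-1 - α : ℝ))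
      (nhdsWithin 0 (Set.Ioi 0))
      (nhds (η * ∫ x in Set.Ioi (0:ℝ),
        (1 - Real.exp (-(z * x))) * q x * x ^ (-1 - α : ℝ))) := by
  have h_slope_nonneg : ∀ᶠ a in 𝓝[>] 0, (1 - exp (-(z * a))) / a ∈ Ici 0 := by
    filter_upwards [self_mem_nhdsWithin] with a (ha : 0 < a)
    exact div_nonneg (sub_nonneg.mpr (exp_le_one_iff.mpr (neg_nonpos.mpr (by positivity)))) ha.le
  have h_slope := tendsto_nhdsWithin_iff.mpr ⟨tendsto_one_sub_exp_neg_mul_div z, h_slope_nonneg⟩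
  have h_cont := continuousOn_temperedStableExponent hα hqmeas
    (fun y => (abs_of_nonneg (hqnonneg y)).trans_le (hqbdd y)) z hz
  refine ((h_cont.tendsto.comp h_slope).const_mul η).congr' ?_
  filter_upwards [self_mem_nhdsWithin] with a (ha : 0 < a)
  have h_cancel : a ^ (-α) * a ^ α = 1 := by rw [← rpow_add ha, neg_add_cancel, rpow_zero]
  rw [Function.comp_apply, setIntegral_one_sub_exp_neg_mul_comp_mul_eq α q ha]
  linear_combination (-(η * temperedStableExponent α q ((1 - exp (-(z * a))) / a))) * h_cancel

theorem stmt5 (α η z : ℝ) (hα : α ∈ Set.Ioo (0:ℝ) 1) (hη : 0 ≤ η) (hz : 0 ≤ z)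
    (q : ℝ → ℝ) (hqmeas : Measurable q) (hqnonneg : ∀ x, 0 ≤ q x)
    (C : ℝ) (hqbdd : ∀ x, q x ≤ C)
    (hq1 : Filter.Tendsto q (nhdsWithin 0 (Set.Ioi 0)) (nhds 1))
    (hqint : IntegrableOn (fun x => min 1 x * q x * x ^ (-1 - α : ℝ)) (Set.Ioi 0)) :
    Filter.Tendsto
      (fun a : ℝ => a ^ (-α : ℝ) * η * ∫ x in Set.Ioi (0:ℝ),
        (1 - Real.exp (-((1 - Real.exp (-(z * a))) * x))) * q (a * x) * x ^ (-1 - α : ℝ))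
      (nhdsWithin 0 (Set.Ioi 0))
      (nhds (η * ∫ x in Set.Ioi (0:ℝ),
        (1 - Real.exp (-(z * x))) * q x * x ^ (-1 - α : ℝ))) :=
  stmt5_general α η z hα hz q hqmeas hqnonneg C hqbdd
end

section
/- Under the same setup (μ regularly varying with tail t^{-α} L(t), α ∈ (0,1), a_n = 1/V^←(n), M_n(A) = n∫1_A(a_n x)μ(dx)), one has lim_{ε↓0} limsup_{n→∞} ∫_{[0,ε)} x M_n(dx) = 0. -/
/-!
Write `G s = μ((s, ∞))` and `b n = V^←(n)`, so that the quantity in the limsup is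
`(n / b n) ∫_{[0, ε b n)} x μ(dx)`. Slow variation of `L` gives the Potter bound
`G s ≤ 2^p (t / s)^p G t` for `t₀ ≤ s ≤ t`, with `α < p < 1`. By the layer-cake formula
`∫_{[0,T)} x μ(dx) ≤ ∫_0^T G`, and integrating the Potter bound gives Karamata's estimate
`∫_{[0,T)} x μ(dx) ≤ K T G T`. The generalized inverse satisfies `n G(2 b n) ≤ 1`, so Potter's bound
between `ε b n` and `2 b n` yields `n G(ε b n) ≤ 2^p (2 / ε)^p`, and the quantity is eventually at
most `K 2^p 2^p ε^(1 - p)`, which tends to `0` with `ε`.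
-/

open MeasureTheory Real Set Filter
open scoped Topology

lemma le_two_rpow_mul_of_doubling {G : ℝ → ℝ} {p t₀ : ℝ} (hp : 0 ≤ p) (ht₀ : 0 < t₀)
    (hG : Antitone G) (hG0 : ∀ s, 0 ≤ G s) (hdouble : ∀ u, t₀ ≤ u → G u ≤ 2 ^ p * G (2 * u))
    {s t : ℝ} (hs : t₀ ≤ s) (hst : s ≤ t) : G s ≤ 2 ^ p * (t / s) ^ p * G t := by
  have hlocal : ∀ s, t₀ ≤ s → s ≤ t → t ≤ 2 * s → G s ≤ 2 ^ p * (t / s) ^ p * G t := by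
    intro s hs hst ht
    have hts : 1 ≤ (t / s) ^ p := one_le_rpow ((one_le_div (ht₀.trans_le hs)).2 hst) hp
    calc G s ≤ 2 ^ p * G t := (hdouble s hs).trans (by gcongr; exact hG ht)
      _ ≤ 2 ^ p * (t / s) ^ p * G t := by
        rw [mul_assoc]; gcongr; exact le_mul_of_one_le_left (hG0 t) hts
  obtain ⟨m, hm⟩ := pow_unbounded_of_one_lt (t / s) one_lt_two
  rw [div_lt_iff₀ (ht₀.trans_le hs)] at hm
  induction m generalizing s with
  | zero => exact hlocal s hs hst (by linarith)
  | succ m ih =>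
    by_cases ht : t ≤ 2 * s
    · exact hlocal s hs hst ht
    have hs0 : 0 < s := ht₀.trans_le hs
    have h2s : 2 ^ p * (t / (2 * s)) ^ p = (t / s) ^ p := by
      rw [← mul_rpow zero_le_two (div_nonneg (by linarith) (by linarith))]; field_simp
    calc G s ≤ 2 ^ p * G (2 * s) := hdouble s hs
      _ ≤ 2 ^ p * (2 ^ p * (t / (2 * s)) ^ p * G t) := by
        rw [pow_succ, mul_assoc] at hm
        gcongr; exact ih (s := 2 * s) (by linarith) (by linarith) hm
      _ = 2 ^ p * (t / s) ^ p * G t := by rw [← h2s]; ring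

lemma exists_tail_le_two_rpow_mul {μ : Measure ℝ} [IsFiniteMeasure μ] {α p : ℝ} (hp : 0 ≤ p)
    (hαp : α < p) {L : ℝ → ℝ} (hL : ∀ t > 0, 0 < L t)
    (hL2 : Tendsto (fun t => L (2 * t) / L t) atTop (𝓝 1))
    (htail : ∀ t > 0, μ.real (Ioi t) = t ^ (-α) * L t) :
    ∃ t₀ > 0, ∀ s t, t₀ ≤ s → s ≤ t → μ.real (Ioi s) ≤ 2 ^ p * (t / s) ^ p * μ.real (Ioi t) := by
  have h1 : (2 : ℝ) ^ (α - p) < 1 := rpow_lt_one_of_one_lt_of_neg one_lt_two (by linarith)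
  obtain ⟨t₁, ht₁⟩ := eventually_atTop.1 (hL2.eventually (lt_mem_nhds h1))
  refine ⟨max t₁ 1, by positivity, fun s t ↦ le_two_rpow_mul_of_doubling hp (by positivity)
    (fun s t hst ↦ measureReal_mono (Ioi_subset_Ioi hst)) (fun s ↦ measureReal_nonneg) ?_⟩
  intro u hu
  have hu0 : 0 < u := by linarith [le_max_right t₁ 1]
  have hLu := (lt_div_iff₀ (hL u hu0)).1 (ht₁ u (le_of_max_le_left hu))
  rw [htail u hu0, htail (2 * u) (by positivity), mul_rpow zero_le_two hu0.le]
  calc u ^ (-α) * L u = u ^ (-α) * (2 ^ (p - α) * (2 ^ (α - p) * L u)) := by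
        rw [← mul_assoc (2 ^ (p - α)), ← rpow_add two_pos]; simp
    _ ≤ u ^ (-α) * (2 ^ (p - α) * L (2 * u)) := by gcongr
    _ = 2 ^ p * (2 ^ (-α) * u ^ (-α) * L (2 * u)) := by
        rw [rpow_sub two_pos, rpow_neg zero_le_two]; ring

lemma setIntegral_Ico_id_le_integral_tail (μ : Measure ℝ) [IsFiniteMeasure μ] {T : ℝ}
    (hT : 0 ≤ T) : ∫ x in Ico 0 T, x ∂μ ≤ ∫ s in 0..T, μ.real (Ioi s) := by
  set f : ℝ → ℝ := (Ico 0 T).indicator id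
  have hf0 : ∀ x, 0 ≤ f x := indicator_nonneg fun x hx ↦ hx.1
  have hfT : ∀ x, f x ≤ T := fun x ↦ by
    by_cases hx : x ∈ Ico 0 T
    · simpa [f, hx] using hx.2.le
    · simpa [f, hx] using hT
  have hf : Integrable f μ := (integrable_const T).mono'
    (measurable_id.indicator measurableSet_Ico).aestronglyMeasurable
    (ae_of_all _ fun x ↦ by simpa [abs_of_nonneg (hf0 x)] using hfT x)
  have hG : Integrable ((Iic T).indicator fun s ↦ μ.real (Ioi s)) (volume.restrict (Ioi 0)) := by
    rw [integrable_indicator_iff measurableSet_Iic, IntegrableOn,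
      Measure.restrict_restrict measurableSet_Iic, inter_comm, Ioi_inter_Iic]
    exact (Antitone.intervalIntegrable (μ := volume) (a := 0) (b := T)
      fun s t hst ↦ measureReal_mono (Ioi_subset_Ioi hst)).1
  have hle : ∀ s > 0, μ.real {x | s < f x} ≤ (Iic T).indicator (fun s ↦ μ.real (Ioi s)) s := by
    intro s hs
    by_cases hsT : s ≤ T
    · rw [indicator_of_mem (mem_Iic.2 hsT)]
      refine measureReal_mono fun x (hx : s < f x) ↦ ?_
      by_cases hx' : x ∈ Ico 0 T
      · simpa [f, hx'] using hx
      · simp only [f, indicator_of_notMem hx'] at hx; linarith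
    · have : {x | s < f x} = ∅ := eq_empty_of_forall_notMem fun x (hx : s < f x) ↦ by
        linarith [hfT x]
      rw [indicator_of_notMem (mt mem_Iic.1 hsT), this, measureReal_empty]
  calc ∫ x in Ico 0 T, x ∂μ = ∫ x, f x ∂μ := (integral_indicator measurableSet_Ico).symm
    _ = ∫ s in Ioi 0, μ.real {x | s < f x} := hf.integral_eq_integral_meas_lt (ae_of_all _ hf0)
    _ ≤ ∫ s in Ioi 0, (Iic T).indicator (fun s ↦ μ.real (Ioi s)) s :=
        integral_mono_of_nonneg (ae_of_all _ fun _ ↦ measureReal_nonneg) hG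
          (ae_restrict_of_forall_mem measurableSet_Ioi hle)
    _ = ∫ s in 0..T, μ.real (Ioi s) := by
        rw [setIntegral_indicator measurableSet_Iic, Ioi_inter_Iic,
          intervalIntegral.integral_of_le hT]

lemma setIntegral_Ico_id_le_of_tail_le {μ : Measure ℝ} [IsFiniteMeasure μ] {p t₀ C T : ℝ}
    (hp : p < 1) (ht₀ : 0 < t₀) (hC : 0 ≤ C)
    (hpotter : ∀ s t, t₀ ≤ s → s ≤ t → μ.real (Ioi s) ≤ C * (t / s) ^ p * μ.real (Ioi t))
    (hT : t₀ ≤ T) :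
    ∫ x in Ico 0 T, x ∂μ ≤ t₀ * μ.real univ + C / (1 - p) * (T * μ.real (Ioi T)) := by
  have hT0 : 0 < T := ht₀.trans_le hT
  have hG : ∀ a b, IntervalIntegrable (fun s ↦ μ.real (Ioi s)) volume a b := fun _ _ ↦
    Antitone.intervalIntegrable fun s t hst ↦ measureReal_mono (Ioi_subset_Ioi hst)
  have hsmall : ∫ s in 0..t₀, μ.real (Ioi s) ≤ t₀ * μ.real univ := by
    calc ∫ s in 0..t₀, μ.real (Ioi s) ≤ ∫ _ in 0..t₀, μ.real univ :=
          intervalIntegral.integral_mono_on ht₀.le (hG _ _) intervalIntegrable_const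
            fun s _ ↦ measureReal_mono (subset_univ _)
      _ = t₀ * μ.real univ := by simp
  have hlarge : ∫ s in t₀..T, μ.real (Ioi s) ≤ C / (1 - p) * (T * μ.real (Ioi T)) := by
    calc ∫ s in t₀..T, μ.real (Ioi s) ≤ ∫ s in t₀..T, C * T ^ p * μ.real (Ioi T) * s ^ (-p) := by
          refine intervalIntegral.integral_mono_on hT (hG _ _)
            ((intervalIntegral.intervalIntegrable_rpow' (by linarith)).const_mul _) fun s hs ↦ ?_
          have hs0 : 0 < s := ht₀.trans_le hs.1
          refine (hpotter s T hs.1 hs.2).trans_eq ?_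
          rw [div_rpow hT0.le hs0.le, rpow_neg hs0.le]
          ring
      _ = C * T ^ p * μ.real (Ioi T) * ((T ^ (1 - p) - t₀ ^ (1 - p)) / (1 - p)) := by
          rw [intervalIntegral.integral_const_mul, integral_rpow (Or.inl (by linarith)),
            neg_add_eq_sub]
      _ ≤ C * T ^ p * μ.real (Ioi T) * (T ^ (1 - p) / (1 - p)) := by
          gcongr ?_ * (?_ / _)
          exact sub_le_self _ (by positivity)
      _ = C / (1 - p) * (T ^ (p + (1 - p)) * μ.real (Ioi T)) := by
          rw [rpow_add hT0]; ring
      _ = C / (1 - p) * (T * μ.real (Ioi T)) := by norm_num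
  calc ∫ x in Ico 0 T, x ∂μ ≤ ∫ s in 0..T, μ.real (Ioi s) :=
        setIntegral_Ico_id_le_integral_tail μ hT0.le
    _ = (∫ s in 0..t₀, μ.real (Ioi s)) + ∫ s in t₀..T, μ.real (Ioi s) :=
        (intervalIntegral.integral_add_adjacent_intervals (hG _ _) (hG _ _)).symm
    _ ≤ _ := add_le_add hsmall hlarge

lemma exists_setIntegral_Ico_id_le_mul_tail {μ : Measure ℝ} [IsFiniteMeasure μ] {p t₀ C : ℝ}
    (hp : p < 1) (ht₀ : 0 < t₀) (hC : 0 ≤ C) (hpos : 0 < μ.real (Ioi t₀))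
    (hpotter : ∀ s t, t₀ ≤ s → s ≤ t → μ.real (Ioi s) ≤ C * (t / s) ^ p * μ.real (Ioi t)) :
    ∃ K, 0 ≤ K ∧ ∀ T, t₀ ≤ T → ∫ x in Ico 0 T, x ∂μ ≤ K * (T * μ.real (Ioi T)) := by
  have hp' : 0 < 1 - p := by linarith
  refine ⟨μ.real univ * C / μ.real (Ioi t₀) + C / (1 - p), by positivity, fun T hT ↦ ?_⟩
  have hratio : (T / t₀) ^ p ≤ T / t₀ := by
    simpa using rpow_le_rpow_of_exponent_le ((one_le_div ht₀).2 hT) hp.le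
  -- Potter's bound between `t₀` and `T` absorbs the constant term of the additive estimate.
  have hconst : t₀ * μ.real (Ioi t₀) ≤ C * (T * μ.real (Ioi T)) := by
    calc t₀ * μ.real (Ioi t₀) ≤ t₀ * (C * (T / t₀) ^ p * μ.real (Ioi T)) := by
          gcongr; exact hpotter t₀ T le_rfl hT
      _ ≤ t₀ * (C * (T / t₀) * μ.real (Ioi T)) := by gcongr
      _ = C * (T * μ.real (Ioi T)) := by field_simp
  calc ∫ x in Ico 0 T, x ∂μ ≤ t₀ * μ.real univ + C / (1 - p) * (T * μ.real (Ioi T)) :=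
        setIntegral_Ico_id_le_of_tail_le hp ht₀ hC hpotter hT
    _ = μ.real univ / μ.real (Ioi t₀) * (t₀ * μ.real (Ioi t₀))
          + C / (1 - p) * (T * μ.real (Ioi T)) := by field_simp
    _ ≤ μ.real univ / μ.real (Ioi t₀) * (C * (T * μ.real (Ioi T)))
          + C / (1 - p) * (T * μ.real (Ioi T)) := by gcongr
    _ = _ := by ring

lemma lt_of_sInf_setOf_lt_lt {V : ℝ → ℝ} (hV : MonotoneOn V (Ioi 0)) {t s : ℝ}
    (h0 : 0 < sInf {s | V s > t}) (hs : sInf {s | V s > t} < s) : V s > t := by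
  have hne : {s | V s > t}.Nonempty := by
    by_contra h
    rw [not_nonempty_iff_eq_empty.1 h, Real.sInf_empty] at h0
    exact h0.false
  have hbdd : BddBelow {s | V s > t} := by
    by_contra h
    rw [Real.sInf_of_not_bddBelow h] at h0
    exact h0.false
  obtain ⟨s', hs', hs's⟩ := exists_lt_of_csInf_lt hne hs
  have hs'0 : 0 < s' := h0.trans_le (csInf_le hbdd hs')
  exact hs'.trans_le (hV hs'0 (hs'0.trans hs's) hs's.le)

lemma mul_tail_lt_one_of_sInf_lt {μ : Measure ℝ} [IsFiniteMeasure μ]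
    (hpos : ∀ s, 0 < s → 0 < μ.real (Ioi s)) {V : ℝ → ℝ}
    (hV : ∀ s, 0 < s → V s = (μ.real (Ioi s))⁻¹) {t s : ℝ} (h0 : 0 < sInf {s | V s > t})
    (hs : sInf {s | V s > t} < s) : t * μ.real (Ioi s) < 1 := by
  have hmono : MonotoneOn V (Ioi 0) := fun s hs t ht hst ↦ by
    rw [hV s hs, hV t ht]
    exact inv_anti₀ (hpos t ht) (measureReal_mono (Ioi_subset_Ioi hst))
  have hs0 : 0 < s := h0.trans hs
  have hVs := lt_of_sInf_setOf_lt_lt hmono h0 hs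
  rwa [hV s hs0, gt_iff_lt, ← one_div, lt_div_iff₀ (hpos s hs0)] at hVs

lemma setIntegral_Ico_id_map_mul {μ : Measure ℝ} {c : ℝ} (hc : 0 < c) (ε : ℝ) :
    ∫ y in Ico 0 ε, y ∂(μ.map fun x ↦ c * x) = c * ∫ x in Ico 0 (ε / c), x ∂μ := by
  have hpre : (fun x ↦ c * x) ⁻¹' Ico 0 ε = Ico 0 (ε / c) := by
    ext x
    simp [lt_div_iff₀ hc, mul_comm, mul_nonneg_iff_of_pos_left hc]
  rw [(measurableEmbedding_mulLeft₀ hc.ne').setIntegral_map, hpre, integral_const_mul]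

lemma setIntegral_Ico_id_map_mul_of_nonpos {μ : Measure ℝ} (hμ : μ (Iio 0) = 0) {c : ℝ}
    (hc : c ≤ 0) (ε : ℝ) : ∫ y in Ico 0 ε, y ∂(μ.map fun x ↦ c * x) = 0 := by
  have hnonpos : ∀ᵐ y ∂(μ.map fun x ↦ c * x), y ≤ 0 := by
    rw [ae_map_iff (measurable_const_mul c).aemeasurable measurableSet_Iic]
    filter_upwards [measure_eq_zero_iff_ae_notMem.1 hμ] with x hx
    exact mul_nonpos_of_nonpos_of_nonneg hc (not_lt.1 hx)
  exact setIntegral_eq_zero_of_ae_eq_zero (hnonpos.mono fun y hy hy' ↦ le_antisymm hy hy'.1)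

lemma tendsto_limsup_of_nonneg_of_eventually_le {α ι : Type*} {l : Filter α} {u : Filter ι}
    [u.NeBot] {f : α → ι → ℝ} {g : α → ℝ} (hg : Tendsto g l (𝓝 0))
    (hf : ∀ᶠ a in l, (∀ i, 0 ≤ f a i) ∧ ∀ᶠ i in u, f a i ≤ g a) :
    Tendsto (fun a ↦ limsup (f a) u) l (𝓝 0) := by
  refine tendsto_of_tendsto_of_tendsto_of_le_of_le' tendsto_const_nhds hg ?_ ?_
  · filter_upwards [hf] with a ⟨h0, hle⟩
    exact le_limsup_of_frequently_le (.of_forall h0) (isBoundedUnder_of_eventually_le hle)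
  · filter_upwards [hf] with a ⟨h0, hle⟩
    exact limsup_le_of_le (isCoboundedUnder_le_of_le u h0) hle

lemma eventually_mul_setIntegral_map_inv_mul_le {μ : Measure ℝ} [IsFiniteMeasure μ]
    (hμ : μ (Iio 0) = 0) (hpos : ∀ s, 0 < s → 0 < μ.real (Ioi s)) {p t₀ C K ε : ℝ}
    (ht₀ : 0 < t₀) (hC : 0 ≤ C) (hK : 0 ≤ K) (hε : 0 < ε) (hε2 : ε ≤ 2)
    (hpotter : ∀ s t, t₀ ≤ s → s ≤ t → μ.real (Ioi s) ≤ C * (t / s) ^ p * μ.real (Ioi t))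
    (hmoment : ∀ T, t₀ ≤ T → ∫ x in Ico 0 T, x ∂μ ≤ K * (T * μ.real (Ioi T)))
    {b : ℕ → ℝ} (hb : ∀ n, 0 < b n → ∀ s, b n < s → n * μ.real (Ioi s) < 1) :
    ∀ᶠ n in atTop, n * ∫ y in Ico 0 ε, y ∂(μ.map fun x ↦ (b n)⁻¹ * x)
      ≤ K * C * 2 ^ p * ε ^ (1 - p) := by
  filter_upwards [tendsto_natCast_atTop_atTop.eventually_ge_atTop (μ.real (Ioi (t₀ / ε)))⁻¹]
    with n hn
  -- `b n ≤ 0` is the junk case of the generalized inverse: the image measure lives on `(-∞, 0]`.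
  rcases le_or_gt (b n) 0 with hb0 | hb0
  · rw [setIntegral_Ico_id_map_mul_of_nonpos hμ (inv_nonpos.2 hb0), mul_zero]
    positivity
  have hεb : t₀ ≤ ε * b n := by
    by_contra! h
    have h1 := hb n hb0 (t₀ / ε) (by rwa [lt_div_iff₀ hε, mul_comm])
    rw [← lt_div_iff₀ (hpos _ (by positivity)), one_div] at h1
    linarith
  have htail : n * μ.real (Ioi (ε * b n)) ≤ C * (2 / ε) ^ p := by
    calc n * μ.real (Ioi (ε * b n))
        ≤ n * (C * (2 * b n / (ε * b n)) ^ p * μ.real (Ioi (2 * b n))) := by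
          gcongr; exact hpotter _ _ hεb (by nlinarith)
      _ = C * (2 / ε) ^ p * (n * μ.real (Ioi (2 * b n))) := by
          rw [mul_div_mul_right _ _ hb0.ne']; ring
      _ ≤ C * (2 / ε) ^ p := mul_le_of_le_one_right (by positivity) (hb n hb0 _ (by linarith)).le
  calc n * ∫ y in Ico 0 ε, y ∂(μ.map fun x ↦ (b n)⁻¹ * x)
      = n * ((b n)⁻¹ * ∫ x in Ico 0 (ε * b n), x ∂μ) := by
        rw [setIntegral_Ico_id_map_mul (inv_pos.2 hb0), div_inv_eq_mul]
    _ ≤ n * ((b n)⁻¹ * (K * (ε * b n * μ.real (Ioi (ε * b n))))) := by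
        gcongr; exact hmoment _ hεb
    _ = K * ε * (n * μ.real (Ioi (ε * b n))) := by field_simp
    _ ≤ K * ε * (C * (2 / ε) ^ p) := by gcongr
    _ = K * C * 2 ^ p * ε ^ (1 - p) := by
        rw [div_rpow zero_le_two hε.le, rpow_sub hε, rpow_one]; ring

theorem stmt10 (α : ℝ) (hα : α ∈ Set.Ioo (0:ℝ) 1)
    (μ : Measure ℝ) [IsProbabilityMeasure μ] (hsupp : μ (Set.Iio 0) = 0)
    (L : ℝ → ℝ) (hLpos : ∀ t > (0:ℝ), 0 < L t)
    (hLsv : ∀ x > (0:ℝ), Filter.Tendsto (fun t => L (x * t) / L t) Filter.atTop (nhds 1))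
    (htail : ∀ t > (0:ℝ), (μ (Set.Ioi t)).toReal = t ^ (-α : ℝ) * L t)
    (V Vinv a : ℝ → ℝ)
    (hV : ∀ t, V t = t ^ (α : ℝ) / L t)
    (hVinv : ∀ t, Vinv t = sInf {s : ℝ | V s > t})
    (ha : ∀ t, a t = 1 / Vinv t) :
    Filter.Tendsto
      (fun ε : ℝ => Filter.limsup
        (fun n : ℕ =>
          (n : ℝ) * ∫ y in Set.Ico (0:ℝ) ε, y ∂(Measure.map (fun x => a n * x) μ))
        Filter.atTop)
      (nhdsWithin 0 (Set.Ioi 0)) (nhds 0) := by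
  obtain ⟨hα0, hα1⟩ := hα
  have hpos : ∀ s, 0 < s → 0 < μ.real (Ioi s) := fun s hs ↦ by
    rw [measureReal_def, htail s hs]; have := hLpos s hs; positivity
  have hVG : ∀ s, 0 < s → V s = (μ.real (Ioi s))⁻¹ := fun s hs ↦ by
    rw [hV, measureReal_def, htail s hs, rpow_neg hs.le, mul_inv, inv_inv, div_eq_mul_inv]
  have hb : ∀ n : ℕ, 0 < Vinv n → ∀ s, Vinv n < s → n * μ.real (Ioi s) < 1 :=
    fun n hn s hs ↦ mul_tail_lt_one_of_sInf_lt hpos hVG (hVinv n ▸ hn) (hVinv n ▸ hs)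
  obtain ⟨p, hαp, hp1⟩ := exists_between hα1
  obtain ⟨t₀, ht₀, hpotter⟩ := exists_tail_le_two_rpow_mul (μ := μ) (by linarith) hαp hLpos
    (hLsv 2 two_pos) htail
  obtain ⟨K, hK, hmoment⟩ := exists_setIntegral_Ico_id_le_mul_tail (by linarith) ht₀
    (by positivity) (hpos t₀ ht₀) hpotter
  refine tendsto_limsup_of_nonneg_of_eventually_le (g := fun ε ↦ K * 2 ^ p * 2 ^ p * ε ^ (1 - p))
    ?_ ?_
  · have h : Tendsto (fun ε : ℝ ↦ ε ^ (1 - p)) (𝓝[>] 0) (𝓝 0) := by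
      simpa [zero_rpow (by linarith : 1 - p ≠ 0)] using
        (continuousAt_rpow_const 0 (1 - p) (.inr (by linarith))).tendsto.mono_left
          nhdsWithin_le_nhds
    simpa using h.const_mul (K * 2 ^ p * 2 ^ p)
  · filter_upwards [Ioo_mem_nhdsGT two_pos] with ε hε
    refine ⟨fun n ↦ mul_nonneg n.cast_nonneg
      (setIntegral_nonneg measurableSet_Ico fun y hy ↦ hy.1), ?_⟩
    simp only [ha, one_div]
    exact eventually_mul_setIntegral_map_inv_mul_le hsupp hpos ht₀ (by positivity) hK hε.1 hε.2.le
      hpotter hmoment hb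
end

section
/- Let (X_n) be random variables on ℤ_+ and (γ_n) a deterministic sequence in [0,1] with γ_n → 0. If γ_n X_n converges in distribution to a random variable X, then γ_n ∘ X_n converges in distribution to N_X, where (N_t) is a rate-1 Poisson process independent of X and γ ∘ Y = Σ_{i=1}^Y ε_i with ε_i iid Bernoulli(γ) independent of Y. -/
/-!
Write `b γ m k = C(m,k) γ^k (1-γ)^(m-k)` for the law of `γ ∘ m`. These binomial weights are
uniformly close to the Poisson weights of mean `γ m`:
`|b γ m k - exp (-γ m) (γ m)^k / k!| ≤ C_k γ` for every `m`, obtained by comparing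
`m (m-1) ⋯ (m-k+1)` with `m^k` and `(1-γ)^(m-k)` with `exp (-γ m)`. Averaging over `m = X_n`, the
pmf of `γ_n ∘ X_n` at `k` is `E[exp (-γ_n X_n) (γ_n X_n)^k / k!] + O(γ_n)`, and the expectation
converges to `P(N_X = k)` since `x ↦ exp (-x) x^k / k!` is bounded and continuous on `[0, ∞)`.
Pointwise convergence of pmfs to a pmf of total mass one is convergence in total variation
(Scheffé), hence convergence against every bounded `f`.
-/

open MeasureTheory Real Set Filter

/-- The probability mass function of the thinned random variable `γ ∘ Y`, where
`γ ∘ Y = Σ_{i=1}^Y ε_i` with `ε_i` iid Bernoulli(γ) independent of `Y`: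
`P(γ ∘ Y = k) = E[ C(Y,k) γ^k (1-γ)^{Y-k} ]`. -/
noncomputable def thinPMF {Ω : Type*} [MeasurableSpace Ω] (P : MeasureTheory.Measure Ω)
    (Y : Ω → ℕ) (γ : ℝ) (k : ℕ) : ℝ :=
  ∫ ω, ((Y ω).choose k : ℝ) * γ ^ k * (1 - γ) ^ (Y ω - k) ∂P

/-- The probability mass function of `N_X`, where `N` is a rate-1 Poisson process
independent of `X`, and `X` has law `μ`: `P(N_X = k) = E[e^{-X} X^k / k!]`. -/
noncomputable def mixedPoissonPMF (μ : MeasureTheory.Measure ℝ) (k : ℕ) : ℝ :=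
  ∫ x, Real.exp (-x) * x ^ k / (Nat.factorial k) ∂μ

open Finset Topology
open scoped BoundedContinuousFunction

theorem Nat.pow_le_descFactorial_add (m k : ℕ) :
    m ^ k ≤ m.descFactorial k + k ^ 2 * m ^ (k - 1) := by
  induction k with
  | zero => simp
  | succ k ih =>
    have hpow : k ^ 2 * (m * m ^ (k - 1)) ≤ k ^ 2 * m ^ k := by
      rcases k with _ | k
      · simp
      · rw [Nat.add_sub_cancel, ← pow_succ']
    have hdesc : m * m.descFactorial k ≤ m.descFactorial (k + 1) + k * m.descFactorial k := by
      rw [Nat.descFactorial_succ, ← add_mul]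
      exact Nat.mul_le_mul_right _ le_tsub_add
    have := Nat.descFactorial_le_pow m k
    calc m ^ (k + 1) = m * m ^ k := pow_succ' ..
      _ ≤ m * (m.descFactorial k + k ^ 2 * m ^ (k - 1)) := Nat.mul_le_mul_left m ih
      _ ≤ m.descFactorial (k + 1) + (k + 1) ^ 2 * m ^ k := by nlinarith

noncomputable def binomWeight (γ : ℝ) (m k : ℕ) : ℝ :=
  m.choose k * γ ^ k * (1 - γ) ^ (m - k)

noncomputable def poissonWeight (x : ℝ) (k : ℕ) : ℝ :=
  exp (-x) * x ^ k / k.factorial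

section Weights

variable {γ x : ℝ}

theorem binomWeight_nonneg (h0 : 0 ≤ γ) (h1 : γ ≤ 1) (m k : ℕ) : 0 ≤ binomWeight γ m k := by
  have : 0 ≤ 1 - γ := by linarith
  unfold binomWeight
  positivity

theorem hasSum_binomWeight (γ : ℝ) (m : ℕ) : HasSum (binomWeight γ m) 1 := by
  have hvanish : ∀ k ∉ range (m + 1), binomWeight γ m k = 0 := fun k hk => by
    rw [binomWeight, Nat.choose_eq_zero_of_lt (by simpa [Nat.lt_succ_iff] using hk)]
    simp
  have h : HasSum (binomWeight γ m) (∑ k ∈ range (m + 1), binomWeight γ m k) :=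
    hasSum_sum_of_ne_finset_zero hvanish
  convert h
  calc (1 : ℝ) = (γ + (1 - γ)) ^ m := by ring
    _ = _ := add_pow γ (1 - γ) m
    _ = _ := sum_congr rfl fun k _ => by unfold binomWeight; ring

theorem binomWeight_le_one (h0 : 0 ≤ γ) (h1 : γ ≤ 1) (m k : ℕ) : binomWeight γ m k ≤ 1 :=
  le_hasSum (hasSum_binomWeight γ m) k fun j _ => binomWeight_nonneg h0 h1 m j

theorem binomWeight_eq_descFactorial (γ : ℝ) (m k : ℕ) :
    binomWeight γ m k = γ ^ k * m.descFactorial k / k.factorial * (1 - γ) ^ (m - k) := by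
  rw [binomWeight, Nat.descFactorial_eq_factorial_mul_choose]
  push_cast
  field_simp

theorem poissonWeight_nonneg (hx : 0 ≤ x) (k : ℕ) : 0 ≤ poissonWeight x k := by
  unfold poissonWeight
  positivity

theorem hasSum_poissonWeight (x : ℝ) : HasSum (poissonWeight x) 1 := by
  have h := (NormedSpace.expSeries_div_hasSum_exp x).mul_left (exp (-x))
  rw [← Real.exp_eq_exp_ℝ, ← Real.exp_add, neg_add_cancel, Real.exp_zero] at h
  have e : poissonWeight x = fun k => exp (-x) * (x ^ k / k.factorial) :=
    funext fun k => mul_div_assoc _ _ _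
  rwa [e]

theorem poissonWeight_le_one (hx : 0 ≤ x) (k : ℕ) : poissonWeight x k ≤ 1 :=
  le_hasSum (hasSum_poissonWeight x) k fun j _ => poissonWeight_nonneg hx j

theorem mul_poissonWeight_le (hx : 0 ≤ x) (k : ℕ) : x * poissonWeight x k ≤ k + 1 := by
  have h := poissonWeight_le_one hx (k + 1)
  rw [poissonWeight, Nat.factorial_succ, Nat.cast_mul, pow_succ, div_le_one (by positivity)] at h
  rw [poissonWeight, mul_div_assoc', div_le_iff₀ (by positivity)]
  push_cast at h
  nlinarith

end Weights

section Estimates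

variable {γ : ℝ}

theorem Real.exp_neg_sub_exp_neg_le (a b : ℝ) : exp (-a) - exp (-b) ≤ (b - a) * exp (-a) := by
  have h := Real.one_sub_le_exp_neg (b - a)
  have hb : exp (-b) = exp (-a) * exp (-(b - a)) := by rw [← Real.exp_add]; ring_nf
  rw [hb]
  nlinarith [Real.exp_pos (-a)]

theorem exp_neg_mul_le_exp_mul_exp_neg_mul (h0 : 0 ≤ γ) (h1 : γ ≤ 1) {a b c : ℝ}
    (hc : 0 ≤ c) (hab : b - a ≤ c) : exp (-(γ * a)) ≤ exp c * exp (-(γ * b)) := by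
  rw [← Real.exp_add, Real.exp_le_exp]
  rcases le_total (b - a) 0 with h | h <;> nlinarith

theorem one_sub_pow_le_exp_neg_mul (h1 : γ ≤ 1) (j : ℕ) : (1 - γ) ^ j ≤ exp (-(γ * j)) := by
  rw [show -(γ * j) = j * -γ by ring, Real.exp_nat_mul]
  exact pow_le_pow_left₀ (by linarith) (Real.one_sub_le_exp_neg γ) j

theorem abs_one_sub_pow_sub_exp_neg_mul_le (h0 : 0 ≤ γ) (h1 : γ ≤ 1) (j : ℕ) :
    |(1 - γ) ^ j - exp (-(γ * j))| ≤ j * γ ^ 2 * exp (-(γ * (j - 1))) := by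
  have hmax : max |1 - γ| |exp (-γ)| = exp (-γ) := by
    rw [abs_of_nonneg (by linarith), abs_of_pos (Real.exp_pos _)]
    exact max_eq_right (Real.one_sub_le_exp_neg γ)
  have hbase : |1 - γ - exp (-γ)| ≤ γ ^ 2 := by
    have h := Real.abs_exp_sub_one_sub_id_le (x := -γ) (by rwa [abs_neg, abs_of_nonneg h0])
    calc |1 - γ - exp (-γ)| = |exp (-γ) - 1 - -γ| := by rw [← abs_neg]; congr 1; ring
      _ ≤ (-γ) ^ 2 := h
      _ = γ ^ 2 := neg_sq γ
  have hpred : (j : ℝ) - 1 ≤ ((j - 1 : ℕ) : ℝ) := by rcases j with _ | j <;> simp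
  have hexp : exp (-γ) ^ (j - 1) ≤ exp (-(γ * (j - 1))) := by
    rw [← Real.exp_nat_mul, Real.exp_le_exp]
    nlinarith
  have hpow := abs_pow_sub_pow_le (1 - γ) (exp (-γ)) j
  rw [hmax, ← Real.exp_nat_mul, show (j : ℝ) * -γ = -(γ * j) by ring] at hpow
  calc _ ≤ _ := hpow
    _ ≤ γ ^ 2 * j * exp (-(γ * (j - 1))) := by gcongr
    _ = _ := by ring

theorem abs_one_sub_pow_sub_exp_neg_mul_le_of_le (h0 : 0 ≤ γ) (h1 : γ ≤ 1) {j m k : ℕ}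
    (hjm : j ≤ m) (hmj : m ≤ j + k) :
    |(1 - γ) ^ j - exp (-(γ * m))| ≤ γ * (γ * m + k) * exp (k + 1) * exp (-(γ * m)) := by
  have hjm' : (j : ℝ) ≤ m := by exact_mod_cast hjm
  have hmj' : (m : ℝ) ≤ j + k := by exact_mod_cast hmj
  have hpow := abs_one_sub_pow_sub_exp_neg_mul_le h0 h1 j
  have hpow' : exp (-(γ * (j - 1))) ≤ exp (k + 1) * exp (-(γ * m)) :=
    exp_neg_mul_le_exp_mul_exp_neg_mul h0 h1 (by positivity) (by linarith)
  have hexp' : exp (-(γ * j)) ≤ exp (k + 1) * exp (-(γ * m)) :=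
    exp_neg_mul_le_exp_mul_exp_neg_mul h0 h1 (by positivity) (by linarith)
  have hsub := Real.exp_neg_sub_exp_neg_le (γ * j) (γ * m)
  have hsub0 : 0 ≤ exp (-(γ * j)) - exp (-(γ * m)) := by
    rw [sub_nonneg, Real.exp_le_exp]
    nlinarith
  calc _ ≤ |(1 - γ) ^ j - exp (-(γ * j))| + |exp (-(γ * j)) - exp (-(γ * m))| := abs_sub_le _ _ _
    _ ≤ j * γ ^ 2 * (exp (k + 1) * exp (-(γ * m)))
        + (γ * m - γ * j) * (exp (k + 1) * exp (-(γ * m))) := by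
      rw [abs_of_nonneg hsub0]
      gcongr
      · exact hpow.trans (by gcongr)
      · exact hsub.trans (mul_le_mul_of_nonneg_left hexp' (by nlinarith))
    _ ≤ _ := by
      have : 0 ≤ exp (k + 1) * exp (-(γ * m)) := by positivity
      nlinarith [mul_nonneg h0 this, mul_nonneg (mul_nonneg h0 h0) this]

theorem sub_descFactorial_div_mul_one_sub_pow_le (h0 : 0 ≤ γ) (h1 : γ ≤ 1) (m k : ℕ) :
    ((γ * m) ^ k - γ ^ k * m.descFactorial k) / k.factorial * (1 - γ) ^ (m - k)
      ≤ k * exp k * γ := by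
  rcases k with _ | j
  · simp
  have hx : 0 ≤ γ * m := by positivity
  have hnat : (m : ℝ) ^ (j + 1) ≤ m.descFactorial (j + 1) + (j + 1 : ℝ) ^ 2 * m ^ j := by
    exact_mod_cast Nat.pow_le_descFactorial_add m (j + 1)
  have hdefect : (γ * m) ^ (j + 1) - γ ^ (j + 1) * m.descFactorial (j + 1)
      ≤ γ ^ (j + 1) * ((j + 1 : ℝ) ^ 2 * m ^ j) := by
    rw [mul_pow]
    nlinarith [pow_nonneg h0 (j + 1)]
  have hQ : (1 - γ) ^ (m - (j + 1)) ≤ exp (j + 1) * exp (-(γ * m)) := by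
    refine (one_sub_pow_le_exp_neg_mul h1 _).trans
      (exp_neg_mul_le_exp_mul_exp_neg_mul h0 h1 (by positivity) ?_)
    have : (m : ℝ) ≤ ((m - (j + 1) : ℕ) : ℝ) + (j + 1) := by exact_mod_cast le_tsub_add
    linarith
  have hP := poissonWeight_le_one hx j
  push_cast
  calc _ ≤ γ ^ (j + 1) * ((j + 1 : ℝ) ^ 2 * m ^ j) / (j + 1).factorial *
          (exp (j + 1) * exp (-(γ * m))) := by
        gcongr
    _ = (j + 1) * exp (j + 1) * γ * poissonWeight (γ * m) j := by
      rw [poissonWeight, Nat.factorial_succ]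
      push_cast
      field_simp
      ring
    _ ≤ (j + 1) * exp (j + 1) * γ := mul_le_of_le_one_right (by positivity) hP

theorem pow_div_factorial_mul_abs_one_sub_pow_sub_exp_le (h0 : 0 ≤ γ) (h1 : γ ≤ 1) (m k : ℕ) :
    (γ * m) ^ k / k.factorial * |(1 - γ) ^ (m - k) - exp (-(γ * m))|
      ≤ (2 * k + 1) * exp (k + 1) * γ := by
  have hx : 0 ≤ γ * m := by positivity
  have h := abs_one_sub_pow_sub_exp_neg_mul_le_of_le h0 h1 (Nat.sub_le m k) (k := k) (by omega)
  have hmean := mul_poissonWeight_le hx k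
  have hP := poissonWeight_le_one hx k
  calc _ ≤ (γ * m) ^ k / k.factorial * (γ * (γ * m + k) * exp (k + 1) * exp (-(γ * m))) := by
        gcongr
    _ = γ * exp (k + 1) * (γ * m * poissonWeight (γ * m) k + k * poissonWeight (γ * m) k) := by
      rw [poissonWeight]
      ring
    _ ≤ γ * exp (k + 1) * ((k + 1) + k * 1) := by gcongr
    _ = _ := by ring

theorem abs_binomWeight_sub_poissonWeight_le (h0 : 0 ≤ γ) (h1 : γ ≤ 1) (m k : ℕ) :
    |binomWeight γ m k - poissonWeight (γ * m) k|
      ≤ (k * exp k + (2 * k + 1) * exp (k + 1)) * γ := by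
  have hdesc : γ ^ k * m.descFactorial k ≤ (γ * m) ^ k := by
    rw [mul_pow]
    gcongr
    exact_mod_cast Nat.descFactorial_le_pow m k
  have hsplit : binomWeight γ m k - poissonWeight (γ * m) k
      = -(((γ * m) ^ k - γ ^ k * m.descFactorial k) / k.factorial * (1 - γ) ^ (m - k))
        + (γ * m) ^ k / k.factorial * ((1 - γ) ^ (m - k) - exp (-(γ * m))) := by
    rw [binomWeight_eq_descFactorial, poissonWeight]
    ring
  rw [hsplit]
  calc _ ≤ _ := abs_add_le _ _
    _ = ((γ * m) ^ k - γ ^ k * m.descFactorial k) / k.factorial * (1 - γ) ^ (m - k)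
        + (γ * m) ^ k / k.factorial * |(1 - γ) ^ (m - k) - exp (-(γ * m))| := by
      have := sub_nonneg.2 hdesc
      rw [abs_neg, abs_of_nonneg (by positivity), abs_mul, abs_of_nonneg (by positivity)]
    _ ≤ k * exp k * γ + (2 * k + 1) * exp (k + 1) * γ :=
      add_le_add (sub_descFactorial_div_mul_one_sub_pow_le h0 h1 m k)
        (pow_div_factorial_mul_abs_one_sub_pow_sub_exp_le h0 h1 m k)
    _ = _ := by ring

end Estimates

theorem hasSum_integral_of_ae_hasSum_one {α : Type*} [MeasurableSpace α] {μ : Measure α}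
    [IsProbabilityMeasure μ] {F : ℕ → α → ℝ} (hF : ∀ k, AEStronglyMeasurable (F k) μ)
    (hF0 : ∀ᵐ x ∂μ, ∀ k, 0 ≤ F k x) (hF1 : ∀ᵐ x ∂μ, HasSum (fun k => F k x) 1) :
    HasSum (fun k => ∫ x, F k x ∂μ) 1 := by
  have h := hasSum_integral_of_dominated_convergence (f := fun _ => 1) F hF
    (fun k => by filter_upwards [hF0] with x hx using (Real.norm_of_nonneg (hx k)).le)
    (by filter_upwards [hF1] with x hx using hx.summable)
    ((integrable_const (1 : ℝ)).congr (by filter_upwards [hF1] with x hx using hx.tsum_eq.symm))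
    hF1
  simpa using h

section ThinPMF

variable {Ω : Type*} [MeasurableSpace Ω] (P : Measure Ω) {Y : Ω → ℕ} {γ : ℝ}

theorem thinPMF_eq_integral_binomWeight (k : ℕ) :
    thinPMF P Y γ k = ∫ ω, binomWeight γ (Y ω) k ∂P := rfl

theorem thinPMF_nonneg (h0 : 0 ≤ γ) (h1 : γ ≤ 1) (k : ℕ) : 0 ≤ thinPMF P Y γ k :=
  integral_nonneg fun ω => binomWeight_nonneg h0 h1 (Y ω) k

theorem hasSum_thinPMF [IsProbabilityMeasure P] (hY : Measurable Y) (h0 : 0 ≤ γ) (h1 : γ ≤ 1) :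
    HasSum (thinPMF P Y γ) 1 :=
  hasSum_integral_of_ae_hasSum_one (F := fun k ω => binomWeight γ (Y ω) k)
    (fun k => ((measurable_from_top (f := (binomWeight γ · k))).comp hY).aestronglyMeasurable)
    (ae_of_all _ fun ω k => binomWeight_nonneg h0 h1 (Y ω) k)
    (ae_of_all _ fun ω => hasSum_binomWeight γ (Y ω))

theorem abs_thinPMF_sub_integral_poissonWeight_le [IsProbabilityMeasure P] (hY : Measurable Y)
    (h0 : 0 ≤ γ) (h1 : γ ≤ 1) (k : ℕ) :
    |thinPMF P Y γ k - ∫ ω, poissonWeight (γ * Y ω) k ∂P|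
      ≤ (k * exp k + (2 * k + 1) * exp (k + 1)) * γ := by
  have hint : ∀ g : ℕ → ℝ, (∀ m, ‖g m‖ ≤ 1) → Integrable (fun ω => g (Y ω)) P := fun g hg =>
    .of_bound ((measurable_from_top (f := g)).comp hY).aestronglyMeasurable 1
      (ae_of_all _ fun ω => hg _)
  have hb := hint (binomWeight γ · k) fun m => by
    rw [Real.norm_of_nonneg (binomWeight_nonneg h0 h1 m k)]
    exact binomWeight_le_one h0 h1 m k
  have hp := hint (fun m => poissonWeight (γ * m) k) fun m => by
    have hx : 0 ≤ γ * m := by positivity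
    rw [Real.norm_of_nonneg (poissonWeight_nonneg hx k)]
    exact poissonWeight_le_one hx k
  rw [thinPMF_eq_integral_binomWeight, ← integral_sub hb hp]
  simpa using norm_integral_le_of_norm_le_const (μ := P)
    (f := fun ω => binomWeight γ (Y ω) k - poissonWeight (γ * Y ω) k)
    (ae_of_all _ fun ω => abs_binomWeight_sub_poissonWeight_le h0 h1 (Y ω) k)

end ThinPMF

section MixedPoissonPMF

variable {μ : Measure ℝ}

theorem ae_nonneg_of_measure_Iio_eq_zero (hμ : μ (Iio 0) = 0) : ∀ᵐ x ∂μ, 0 ≤ x := by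
  rw [ae_iff]
  simp only [not_le]
  exact hμ

theorem mixedPoissonPMF_nonneg (hμ : μ (Iio 0) = 0) (k : ℕ) : 0 ≤ mixedPoissonPMF μ k :=
  integral_nonneg_of_ae <| by
    filter_upwards [ae_nonneg_of_measure_Iio_eq_zero hμ] with x hx using poissonWeight_nonneg hx k

theorem hasSum_mixedPoissonPMF [IsProbabilityMeasure μ] (hμ : μ (Iio 0) = 0) :
    HasSum (mixedPoissonPMF μ) 1 :=
  hasSum_integral_of_ae_hasSum_one
    (fun k => (by unfold poissonWeight; fun_prop : Continuous (poissonWeight · k))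
      |>.aestronglyMeasurable)
    (by filter_upwards [ae_nonneg_of_measure_Iio_eq_zero hμ] with x hx
          using fun k => poissonWeight_nonneg hx k)
    (ae_of_all _ hasSum_poissonWeight)

end MixedPoissonPMF

section Scheffe

variable {ι α : Type*} {l : Filter ι} {p : ι → α → ℝ} {q : α → ℝ}

/-- Scheffé's lemma for probability mass functions. -/
theorem tendsto_tsum_abs_sub_of_tendsto (hp0 : ∀ i a, 0 ≤ p i a) (hp1 : ∀ i, HasSum (p i) 1)
    (hq0 : ∀ a, 0 ≤ q a) (hq1 : HasSum q 1) (hlim : ∀ a, Tendsto (fun i => p i a) l (𝓝 (q a))) :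
    Tendsto (fun i => ∑' a, |p i a - q a|) l (𝓝 0) := by
  set d : ι → α → ℝ := fun i a => max (q a - p i a) 0
  have hd_le : ∀ i a, d i a ≤ q a := fun i a => max_le (by linarith [hp0 i a]) (hq0 a)
  have hd_summable : ∀ i, Summable (d i) := fun i =>
    .of_nonneg_of_le (fun a => le_max_right _ _) (hd_le i) hq1.summable
  -- the positive and negative parts of `p i - q` have equal mass, both sums being `1`
  have habs : ∀ i, ∑' a, |p i a - q a| = 2 * ∑' a, d i a := by
    intro i
    have h := ((hd_summable i).hasSum.mul_left 2).add ((hp1 i).sub hq1)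
    rw [sub_self, add_zero] at h
    refine Eq.trans (tsum_congr fun a => ?_) h.tsum_eq
    rcases le_total (p i a) (q a) with hpq | hpq
    · rw [abs_of_nonpos (by linarith), show d i a = q a - p i a from max_eq_left (by linarith)]
      ring
    · rw [abs_of_nonneg (by linarith), show d i a = 0 from max_eq_right (by linarith)]
      ring
  have hd : Tendsto (fun i => ∑' a, d i a) l (𝓝 0) := by
    have hd_lim : ∀ a, Tendsto (fun i => d i a) l (𝓝 0) := fun a => by
      have h := ((tendsto_const_nhds (x := q a)).sub (hlim a)).max (tendsto_const_nhds (x := 0))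
      rwa [sub_self, max_self] at h
    simpa using tendsto_tsum_of_dominated_convergence hq1.summable hd_lim
      (.of_forall fun i a => by rw [Real.norm_of_nonneg (le_max_right _ _)]; exact hd_le i a)
  simpa [habs] using hd.const_mul 2

theorem tendsto_tsum_mul_of_tendsto (hp0 : ∀ i a, 0 ≤ p i a) (hp1 : ∀ i, HasSum (p i) 1)
    (hq0 : ∀ a, 0 ≤ q a) (hq1 : HasSum q 1) (hlim : ∀ a, Tendsto (fun i => p i a) l (𝓝 (q a)))
    (f : α → ℝ) {C : ℝ} (hf : ∀ a, ‖f a‖ ≤ C) :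
    Tendsto (fun i => ∑' a, f a * p i a) l (𝓝 (∑' a, f a * q a)) := by
  have hsummable : ∀ r : α → ℝ, (∀ a, 0 ≤ r a) → Summable r → Summable fun a => f a * r a :=
    fun r hr0 hr => .of_norm_bounded (hr.mul_left C) fun a => by
      rw [norm_mul, Real.norm_of_nonneg (hr0 a)]
      exact mul_le_mul_of_nonneg_right (hf a) (hr0 a)
  have hbound : ∀ i, ‖∑' a, f a * p i a - ∑' a, f a * q a‖ ≤ C * ∑' a, |p i a - q a| := by
    intro i
    have habs : Summable fun a => |p i a - q a| :=
      .of_nonneg_of_le (fun a => abs_nonneg _) (fun a => abs_sub_le_of_nonneg_of_le (hp0 i a)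
        (le_add_of_nonneg_right (hq0 a)) (hq0 a) (le_add_of_nonneg_left (hp0 i a)))
        ((hp1 i).summable.add hq1.summable)
    rw [← (hsummable _ (hp0 i) (hp1 i).summable).tsum_sub (hsummable _ hq0 hq1.summable),
      ← tsum_mul_left]
    refine tsum_of_norm_bounded (habs.mul_left C).hasSum fun a => ?_
    rw [← mul_sub, norm_mul, Real.norm_eq_abs (p i a - q a)]
    exact mul_le_mul_of_nonneg_right (hf a) (abs_nonneg _)
  have h := tendsto_tsum_abs_sub_of_tendsto hp0 hp1 hq0 hq1 hlim
  exact tendsto_sub_nhds_zero_iff.1 (squeeze_zero_norm hbound (by simpa using h.const_mul C))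

end Scheffe

-- The truncation is needed because `x ↦ exp (-x) * x ^ k` is unbounded as `x → -∞`.
noncomputable def truncPoissonWeight (k : ℕ) : ℝ →ᵇ ℝ :=
  .ofNormedAddCommGroup (fun x => poissonWeight (max x 0) k)
    (by unfold poissonWeight; fun_prop) 1 fun x => by
      rw [Real.norm_of_nonneg (poissonWeight_nonneg (le_max_right x 0) k)]
      exact poissonWeight_le_one (le_max_right x 0) k

theorem truncPoissonWeight_of_nonneg {x : ℝ} (hx : 0 ≤ x) (k : ℕ) :
    truncPoissonWeight k x = poissonWeight x k := by
  simp [truncPoissonWeight, max_eq_left hx]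

theorem tendsto_thinPMF {Ω : Type*} [MeasurableSpace Ω] (P : Measure Ω) [IsProbabilityMeasure P]
    {X : ℕ → Ω → ℕ} (hXmeas : ∀ n, Measurable (X n)) {γ : ℕ → ℝ}
    (hγ : ∀ n, γ n ∈ Icc (0 : ℝ) 1) (hγ0 : Tendsto γ atTop (𝓝 0))
    {μX : Measure ℝ} (hμX : μX (Iio 0) = 0)
    (hconv : ∀ f : ℝ →ᵇ ℝ,
      Tendsto (fun n => ∫ ω, f (γ n * (X n ω : ℝ)) ∂P) atTop (𝓝 (∫ x, f x ∂μX)))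
    (k : ℕ) :
    Tendsto (fun n => thinPMF P (X n) (γ n) k) atTop (𝓝 (mixedPoissonPMF μX k)) := by
  have hpoisson : Tendsto (fun n => ∫ ω, poissonWeight (γ n * X n ω) k ∂P) atTop
      (𝓝 (mixedPoissonPMF μX k)) := by
    have hlim : ∫ x, truncPoissonWeight k x ∂μX = mixedPoissonPMF μX k :=
      integral_congr_ae <| by
        filter_upwards [ae_nonneg_of_measure_Iio_eq_zero hμX] with x hx
          using truncPoissonWeight_of_nonneg hx k
    have hseq : ∀ n, ∫ ω, truncPoissonWeight k (γ n * X n ω) ∂P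
        = ∫ ω, poissonWeight (γ n * X n ω) k ∂P := fun n =>
      integral_congr_ae <| ae_of_all _ fun ω =>
        truncPoissonWeight_of_nonneg (mul_nonneg (hγ n).1 (Nat.cast_nonneg _)) k
    simpa only [hlim, hseq] using hconv (truncPoissonWeight k)
  have hdiff := squeeze_zero_norm
    (fun n => (Real.norm_eq_abs _).trans_le
      (abs_thinPMF_sub_integral_poissonWeight_le P (hXmeas n) (hγ n).1 (hγ n).2 k))
    (by simpa using hγ0.const_mul (k * exp k + (2 * k + 1) * exp (k + 1)))
  simpa using hdiff.add hpoisson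

theorem stmt13 {Ω : Type*} [MeasurableSpace Ω] (P : Measure Ω) [IsProbabilityMeasure P]
    (X : ℕ → Ω → ℕ) (hXmeas : ∀ n, Measurable (X n))
    (γ : ℕ → ℝ) (hγ : ∀ n, γ n ∈ Set.Icc (0:ℝ) 1)
    (hγ0 : Filter.Tendsto γ Filter.atTop (nhds 0))
    -- the law of the limit X (a nonnegative random variable)
    (μX : Measure ℝ) [IsProbabilityMeasure μX] (hμX : μX (Set.Iio 0) = 0)
    -- γ_n X_n → X in distribution
    (hconv : ∀ f : BoundedContinuousFunction ℝ ℝ,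
      Filter.Tendsto (fun n => ∫ ω, f (γ n * (X n ω : ℝ)) ∂P)
        Filter.atTop (nhds (∫ x, f x ∂μX))) :
    -- conclusion: γ_n ∘ X_n → N_X in distribution
    ∀ f : BoundedContinuousFunction ℕ ℝ,
      Filter.Tendsto (fun n => ∑' k : ℕ, f k * thinPMF P (X n) (γ n) k)
        Filter.atTop (nhds (∑' k : ℕ, f k * mixedPoissonPMF μX k)) := fun f =>
  tendsto_tsum_mul_of_tendsto (fun n => thinPMF_nonneg P (hγ n).1 (hγ n).2)
    (fun n => hasSum_thinPMF P (hXmeas n) (hγ n).1 (hγ n).2)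
    (mixedPoissonPMF_nonneg hμX) (hasSum_mixedPoissonPMF hμX)
    (tendsto_thinPMF P hXmeas hγ hγ0 hμX hconv) f f.norm_coe_le_norm
end
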